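/- arXiv:2504.04791 — 5 statements merged into one kernel-verified Lean document; each statement's English description precedes it below -/
import Mathlib

section
/- Let M, T be symmetric positive definite n×n matrices. Then X := ( (1/2) T^{-1/2} (I + 4 T^{1/2} M⁻¹ T^{1/2})^{1/2} T^{-1/2} − (1/2) T⁻¹ )⁻¹ is symmetric positive definite and satisfies the fixed-point (Riccati) equation X = M + T − T (X + T)⁻¹ T. -/
/-! Write `R = T^{1/2}`. Congruence by `R` turns the Riccati equation for `X = R x R`,
`M = R N R`, `T = R 1 R` into `x = N + 1 - (x + 1)⁻¹`, and the hypothesis on `S` says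
`N = 4 (S² - 1)⁻¹`. Everything is now a rational function of `S`, and `x = 2 (S - 1)⁻¹`
solves the reduced equation by partial fractions: `x = N + 2 (S + 1)⁻¹` and
`1 - (x + 1)⁻¹ = 2 (S + 1)⁻¹`. The first identity also shows `X = M + 2 R (S + 1)⁻¹ R`,
a sum of positive definite matrices. -/

open Matrix

namespace Matrix.PosSemidef

open scoped ComplexOrder

/-- The positive semidefinite square root, as defined in Mathlib of December 2024
(removed from Mathlib since). -/
noncomputable def sqrt {n : Type*} [Fintype n] [DecidableEq n] {𝕜 : Type*} [RCLike 𝕜]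
    {A : Matrix n n 𝕜} (hA : A.PosSemidef) : Matrix n n 𝕜 :=
  hA.1.eigenvectorUnitary.1 * diagonal ((↑) ∘ (√·) ∘ hA.1.eigenvalues) *
  (star hA.1.eigenvectorUnitary : Matrix n n 𝕜)

end Matrix.PosSemidef

namespace Matrix.PosSemidef

open scoped ComplexOrder

variable {n 𝕜 : Type*} [Fintype n] [DecidableEq n] [RCLike 𝕜] {A : Matrix n n 𝕜}

lemma sqrt_mul_self (hA : A.PosSemidef) : hA.sqrt * hA.sqrt = A := by
  set U : Matrix n n 𝕜 := hA.1.eigenvectorUnitary.1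
  set D : Matrix n n 𝕜 := diagonal ((↑) ∘ (√·) ∘ hA.1.eigenvalues)
  have hUU : star U * U = 1 := Unitary.star_mul_self_of_mem hA.1.eigenvectorUnitary.2
  have hDD : D * D = diagonal (RCLike.ofReal ∘ hA.1.eigenvalues) := by
    simp only [D, diagonal_mul_diagonal, Function.comp_apply, ← RCLike.ofReal_mul,
      Real.mul_self_sqrt (hA.eigenvalues_nonneg _)]
    rfl
  calc hA.sqrt * hA.sqrt = U * (D * (star U * U) * D) * star U := by
        simp only [sqrt, Matrix.mul_assoc]; rfl
    _ = A := by
        rw [hUU, Matrix.mul_one, hDD]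
        conv_rhs => rw [hA.1.spectral_theorem, Unitary.conjStarAlgAut_apply]

lemma posSemidef_sqrt (hA : A.PosSemidef) : hA.sqrt.PosSemidef :=
  (PosSemidef.diagonal fun i => by simp [Real.sqrt_nonneg]).mul_mul_conjTranspose_same
    (hA.1.eigenvectorUnitary : Matrix n n 𝕜)

end Matrix.PosSemidef

namespace Matrix

section Riccati

variable {m K : Type*} [DecidableEq m] [Field K]

lemma add_one_sub_sub_one (S : Matrix m m K) : (S + 1) - (S - 1) = (2 : K) • 1 := by
  rw [two_smul]; abel

variable [Fintype m]

lemma riccati_congr {P Q M T X : Matrix m m K} (hP : IsUnit P.det) (hQ : IsUnit Q.det)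
    (h : X = M + T - T * (X + T)⁻¹ * T) :
    P * X * Q = P * M * Q + P * T * Q - P * T * Q * (P * X * Q + P * T * Q)⁻¹ * (P * T * Q) := by
  have hsum : P * X * Q + P * T * Q = P * (X + T) * Q := by noncomm_ring
  have hcancel : P * T * Q * (Q⁻¹ * ((X + T)⁻¹ * P⁻¹)) * (P * T * Q) =
      P * (T * (X + T)⁻¹ * T) * Q := by
    simp only [Matrix.mul_assoc, mul_nonsing_inv_cancel_left _ _ hQ,
      nonsing_inv_mul_cancel_left _ _ hP]
  rw [hsum, Matrix.mul_inv_rev, Matrix.mul_inv_rev, hcancel]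
  conv_lhs => rw [h]
  noncomm_ring

lemma inv_smul_of_ne_zero {c : K} (hc : c ≠ 0) {A : Matrix m m K} (hA : IsUnit A.det) :
    (c • A)⁻¹ = c⁻¹ • A⁻¹ := by
  simpa [Units.smul_def] using inv_smul' A (Units.mk0 c hc) hA

variable {S : Matrix m m K}

lemma inv_sub_one_sub_inv_add_one (hm : IsUnit (S - 1).det) (hp : IsUnit (S + 1).det) :
    (S - 1)⁻¹ - (S + 1)⁻¹ = (2 : K) • (S * S - 1)⁻¹ :=
  calc (S - 1)⁻¹ - (S + 1)⁻¹ = (S - 1)⁻¹ * ((S + 1) - (S - 1)) * (S + 1)⁻¹ := by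
        rw [Matrix.mul_sub, Matrix.sub_mul, mul_nonsing_inv_cancel_right (A := S + 1) _ hp,
          nonsing_inv_mul _ hm, Matrix.one_mul]
    _ = (2 : K) • ((S + 1) * (S - 1))⁻¹ := by
        rw [add_one_sub_sub_one, Matrix.mul_inv_rev, Matrix.mul_smul, Matrix.mul_one,
          Matrix.smul_mul]
    _ = (2 : K) • (S * S - 1)⁻¹ := by congr 2; noncomm_ring

lemma one_sub_inv_two_smul_inv_sub_one_add_one (hm : IsUnit (S - 1).det)
    (hp : IsUnit (S + 1).det) :
    1 - ((2 : K) • (S - 1)⁻¹ + 1)⁻¹ = (2 : K) • (S + 1)⁻¹ := by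
  have hfactor : (2 : K) • (S - 1)⁻¹ + 1 = (S - 1)⁻¹ * (S + 1) := by
    rw [← sub_add_cancel (S + 1) (S - 1), add_one_sub_sub_one, Matrix.mul_add,
      nonsing_inv_mul _ hm, Matrix.mul_smul, Matrix.mul_one, add_comm]
  calc 1 - ((2 : K) • (S - 1)⁻¹ + 1)⁻¹ = (S + 1)⁻¹ * ((S + 1) - (S - 1)) := by
        rw [Matrix.mul_sub, nonsing_inv_mul _ hp, hfactor, Matrix.mul_inv_rev,
          nonsing_inv_nonsing_inv _ hm]
    _ = (2 : K) • (S + 1)⁻¹ := by rw [add_one_sub_sub_one, Matrix.mul_smul, Matrix.mul_one]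

lemma two_smul_inv_sub_one_eq (hm : IsUnit (S - 1).det) (hp : IsUnit (S + 1).det) :
    (2 : K) • (S - 1)⁻¹ = (4 : K) • (S * S - 1)⁻¹ + (2 : K) • (S + 1)⁻¹ := by
  rw [← sub_eq_iff_eq_add, ← smul_sub, inv_sub_one_sub_inv_add_one hm hp, smul_smul]
  norm_num

lemma riccati_two_smul_inv_sub_one (hm : IsUnit (S - 1).det) (hp : IsUnit (S + 1).det) :
    (2 : K) • (S - 1)⁻¹ =
      (4 : K) • (S * S - 1)⁻¹ + 1 - 1 * ((2 : K) • (S - 1)⁻¹ + 1)⁻¹ * 1 := by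
  rw [Matrix.one_mul, Matrix.mul_one, add_sub_assoc,
    one_sub_inv_two_smul_inv_sub_one_add_one hm hp, two_smul_inv_sub_one_eq hm hp]

lemma inv_half_smul_conj_sub_half_smul_inv [CharZero K] {R : Matrix m m K} (hR : IsUnit R.det)
    (hm : IsUnit (S - 1).det) :
    ((1/2 : K) • (R⁻¹ * S * R⁻¹) - (1/2 : K) • (R * R)⁻¹)⁻¹ = R * ((2 : K) • (S - 1)⁻¹) * R := by
  have hconj : (1/2 : K) • (R⁻¹ * S * R⁻¹) - (1/2 : K) • (R * R)⁻¹ =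
      R⁻¹ * ((1/2 : K) • (S - 1)) * R⁻¹ := by
    simp only [Matrix.mul_inv_rev, Matrix.mul_smul, Matrix.smul_mul, Matrix.mul_sub,
      Matrix.sub_mul, Matrix.mul_one, smul_sub]
  rw [hconj, Matrix.mul_inv_rev, Matrix.mul_inv_rev, nonsing_inv_nonsing_inv _ hR,
    inv_smul_of_ne_zero (by norm_num) hm, Matrix.mul_assoc]
  norm_num

lemma eq_conj_smul_inv_of_eq_smul_conj_inv {A B R : Matrix m m K} {c : K} (hc : c ≠ 0)
    (hB : IsUnit B.det) (hR : IsUnit R.det) (hA : A = c • (R * B⁻¹ * R)) :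
    B = R * (c • A⁻¹) * R := by
  have hRBR : IsUnit (R * B⁻¹ * R).det := by
    simpa only [det_mul] using (hR.mul (isUnit_nonsing_inv_det _ hB)).mul hR
  rw [hA, inv_smul_of_ne_zero hc hRBR, smul_smul, mul_inv_cancel₀ hc, one_smul,
    Matrix.mul_inv_rev, Matrix.mul_inv_rev, nonsing_inv_nonsing_inv _ hB]
  simp only [Matrix.mul_assoc, mul_nonsing_inv_cancel_left _ _ hR, nonsing_inv_mul _ hR,
    Matrix.mul_one]

end Riccati

end Matrix

section StationaryEFIM

variable {m : Type*} [Fintype m] [DecidableEq m]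

lemma Matrix.PosDef.mul_mul_of_isHermitian {𝕜 : Type*} [Ring 𝕜] [PartialOrder 𝕜] [StarRing 𝕜]
    {A R : Matrix m m 𝕜} (hA : A.PosDef) (hR : R.IsHermitian) (hRu : IsUnit R) :
    (R * A * R).PosDef := by
  simpa only [star_eq_conjTranspose, hR.eq] using
    (Matrix.IsUnit.posDef_star_left_conjugate_iff hRu).mpr hA

theorem posDef_and_riccati_of_mul_self_eq {M T R S : Matrix m m ℝ} (hM : M.PosDef)
    (hR : R.IsHermitian) (hRu : IsUnit R) (hRR : R * R = T) (hS : S.PosDef)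
    (hSsq : S * S = 1 + (4 : ℝ) • (R * M⁻¹ * R)) :
    let X := ((1/2 : ℝ) • (R⁻¹ * S * R⁻¹) - (1/2 : ℝ) • T⁻¹)⁻¹
    X.PosDef ∧ X = M + T - T * (X + T)⁻¹ * T := by
  intro X
  subst hRR
  have hRd : IsUnit R.det := (isUnit_iff_isUnit_det R).mp hRu
  have hSp : (S + 1).PosDef := hS.add .one
  have hp : IsUnit (S + 1).det := (isUnit_iff_isUnit_det _).mp hSp.isUnit
  have hSS : S * S - 1 = (4 : ℝ) • (R * M⁻¹ * R) := by rw [hSsq, add_sub_cancel_left]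
  have hSSd : IsUnit (S * S - 1).det := (isUnit_iff_isUnit_det _).mp <| by
    rw [hSS]; exact ((hM.inv.mul_mul_of_isHermitian hR hRu).smul four_pos).isUnit
  have hm : IsUnit (S - 1).det := by
    refine isUnit_of_mul_isUnit_left (y := (S + 1).det) ?_
    rwa [← det_mul, show (S - 1) * (S + 1) = S * S - 1 by noncomm_ring]
  have hX : X = R * ((2 : ℝ) • (S - 1)⁻¹) * R := inv_half_smul_conj_sub_half_smul_inv hRd hm
  have hMR : M = R * ((4 : ℝ) • (S * S - 1)⁻¹) * R :=
    eq_conj_smul_inv_of_eq_smul_conj_inv four_ne_zero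
      ((isUnit_iff_isUnit_det M).mp hM.isUnit) hRd hSS
  constructor
  · rw [hX, two_smul_inv_sub_one_eq hm hp, Matrix.mul_add, Matrix.add_mul, ← hMR]
    exact hM.add ((hSp.inv.smul two_pos).mul_mul_of_isHermitian hR hRu)
  · have h := riccati_congr hRd hRd (riccati_two_smul_inv_sub_one hm hp)
    rwa [← hMR, Matrix.mul_one, ← hX] at h

end StationaryEFIM

/-- The stationary EFIM. Let `M`, `T` be symmetric positive definite and `S` the
(unique) symmetric positive definite square root of `I + 4 T^{1/2} M⁻¹ T^{1/2}`
(with `T^{1/2}` the positive semidefinite square root of `T`). Then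
`X := ((1/2) T^{-1/2} S T^{-1/2} − (1/2) T⁻¹)⁻¹` is positive definite and solves the
Riccati fixed-point equation `X = M + T − T (X + T)⁻¹ T`. -/
theorem stmt9 {n : ℕ} (M T : Matrix (Fin n) (Fin n) ℝ) (hM : M.PosDef) (hT : T.PosDef)
    (S : Matrix (Fin n) (Fin n) ℝ) (hS : S.PosDef)
    (hSsq : S * S = 1 + (4 : ℝ) • (hT.posSemidef.sqrt * M⁻¹ * hT.posSemidef.sqrt)) :
    ((((1/2 : ℝ) • ((hT.posSemidef.sqrt)⁻¹ * S * (hT.posSemidef.sqrt)⁻¹) -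
        (1/2 : ℝ) • T⁻¹)⁻¹).PosDef) ∧
    ((1/2 : ℝ) • ((hT.posSemidef.sqrt)⁻¹ * S * (hT.posSemidef.sqrt)⁻¹) -
        (1/2 : ℝ) • T⁻¹)⁻¹ =
      M + T - T * ((((1/2 : ℝ) • ((hT.posSemidef.sqrt)⁻¹ * S * (hT.posSemidef.sqrt)⁻¹) -
        (1/2 : ℝ) • T⁻¹)⁻¹ + T))⁻¹ * T := by
  have hRR : hT.posSemidef.sqrt * hT.posSemidef.sqrt = T := hT.posSemidef.sqrt_mul_self
  have hRu : IsUnit hT.posSemidef.sqrt := isUnit_of_mul_isUnit_left (hRR ▸ hT.isUnit)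
  exact posDef_and_riccati_of_mul_self_eq hM hT.posSemidef.posSemidef_sqrt.isHermitian hRu hRR
    hS hSsq
end

section
/- Let M, T be symmetric positive definite and define the map f(J) = M + T − T(J + T)⁻¹T on symmetric positive semidefinite matrices. Then f is monotone with respect to the Loewner order: if 0 ⪯ J₁ ⪯ J₂ then f(J₁) ⪯ f(J₂), and M ⪯ f(J) ⪯ M + T for all J ⪰ 0. -/
open Matrix

lemma inv_sub_inv_psd {n : ℕ} {A B : Matrix (Fin n) (Fin n) ℝ}
    (hA : A.PosDef) (hB : B.PosDef) (hD : (B - A).PosSemidef) :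
    (A⁻¹ - B⁻¹).PosSemidef := by
  have hAd : IsUnit A.det := hA.det_pos.ne'.isUnit
  have hBd : IsUnit B.det := hB.det_pos.ne'.isUnit
  have h1 : A * A⁻¹ = 1 := Matrix.mul_nonsing_inv A hAd
  have h2 : A⁻¹ * A = 1 := Matrix.nonsing_inv_mul A hAd
  have h3 : B * B⁻¹ = 1 := Matrix.mul_nonsing_inv B hBd
  have h4 : B⁻¹ * B = 1 := Matrix.nonsing_inv_mul B hBd
  have key : A⁻¹ - B⁻¹
      = B⁻¹ * (B - A) * B⁻¹ + (B⁻¹ * (B - A)) * A⁻¹ * ((B - A) * B⁻¹) := by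
    have e1 : B⁻¹ * (B - A) * A⁻¹ = A⁻¹ - B⁻¹ := by
      rw [Matrix.mul_sub, Matrix.sub_mul, h4, Matrix.one_mul, Matrix.mul_assoc, h1,
        Matrix.mul_one]
    have e2 : (B - A) * B⁻¹ = 1 - A * B⁻¹ := by
      rw [Matrix.sub_mul, h3]
    rw [show (B⁻¹ * (B - A)) * A⁻¹ = B⁻¹ * (B - A) * A⁻¹ from rfl, e1, e2]
    have e3 : B⁻¹ * (B - A) * B⁻¹ = B⁻¹ - B⁻¹ * A * B⁻¹ := by
      rw [Matrix.mul_sub, Matrix.sub_mul, h4, Matrix.one_mul]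
    rw [e3, Matrix.mul_sub, Matrix.mul_one, Matrix.sub_mul,
      ← Matrix.mul_assoc A⁻¹ A B⁻¹, h2, Matrix.one_mul, ← Matrix.mul_assoc B⁻¹ A B⁻¹]
    abel
  have hBi : B⁻¹.IsHermitian := hB.inv.isHermitian
  have hDh : (B - A).IsHermitian := hD.isHermitian
  have hC : (B⁻¹ * (B - A))ᴴ = (B - A) * B⁻¹ := by
    rw [Matrix.conjTranspose_mul, hBi.eq, hDh.eq]
  have t1 : (B⁻¹ * (B - A) * B⁻¹).PosSemidef := by
    have := hD.mul_mul_conjTranspose_same B⁻¹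
    rwa [hBi.eq] at this
  have t2 : ((B⁻¹ * (B - A)) * A⁻¹ * ((B - A) * B⁻¹)).PosSemidef := by
    have := hA.inv.posSemidef.mul_mul_conjTranspose_same (B⁻¹ * (B - A))
    rwa [hC] at this
  rw [key]
  exact t1.add t2

/-- The recursive EFIM update map `f(J) = M + T − T (J + T)⁻¹ T` is monotone in the
Loewner order on positive semidefinite matrices, and `M ⪯ f(J) ⪯ M + T` for `J ⪰ 0`. -/
theorem stmt10 {n : ℕ} (M T : Matrix (Fin n) (Fin n) ℝ)
    (hM : M.PosDef) (hT : T.PosDef) :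
    (∀ J₁ J₂ : Matrix (Fin n) (Fin n) ℝ, J₁.PosSemidef → (J₂ - J₁).PosSemidef →
      ((M + T - T * (J₂ + T)⁻¹ * T) - (M + T - T * (J₁ + T)⁻¹ * T)).PosSemidef) ∧
    (∀ J : Matrix (Fin n) (Fin n) ℝ, J.PosSemidef →
      ((M + T - T * (J + T)⁻¹ * T) - M).PosSemidef ∧
      ((M + T) - (M + T - T * (J + T)⁻¹ * T)).PosSemidef) := by
  have hTh := hT.isHermitian
  constructor
  · intro J₁ J₂ hJ₁ hD
    have hJ₂ : J₂.PosSemidef := by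
      have := hD.add hJ₁
      simpa using this
    have hS₁ : (J₁ + T).PosDef := Matrix.PosDef.posSemidef_add hJ₁ hT
    have hS₂ : (J₂ + T).PosDef := Matrix.PosDef.posSemidef_add hJ₂ hT
    have hDS : ((J₂ + T) - (J₁ + T)).PosSemidef := by
      simpa using hD
    have hinv : ((J₁ + T)⁻¹ - (J₂ + T)⁻¹).PosSemidef := inv_sub_inv_psd hS₁ hS₂ hDS
    have := hinv.mul_mul_conjTranspose_same T
    rw [hTh.eq] at this
    have heq : (M + T - T * (J₂ + T)⁻¹ * T) - (M + T - T * (J₁ + T)⁻¹ * T)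
        = T * ((J₁ + T)⁻¹ - (J₂ + T)⁻¹) * T := by
      rw [Matrix.mul_sub, Matrix.sub_mul]
      abel
    rwa [heq]
  · intro J hJ
    have hS : (J + T).PosDef := Matrix.PosDef.posSemidef_add hJ hT
    have hTd : IsUnit T.det := hT.det_pos.ne'.isUnit
    have hTi : T * T⁻¹ = 1 := Matrix.mul_nonsing_inv T hTd
    constructor
    · have hDS : ((J + T) - T).PosSemidef := by simpa using hJ
      have hinv : (T⁻¹ - (J + T)⁻¹).PosSemidef := inv_sub_inv_psd hT hS hDS
      have h := hinv.mul_mul_conjTranspose_same T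
      rw [hTh.eq] at h
      have heq : (M + T - T * (J + T)⁻¹ * T) - M = T * (T⁻¹ - (J + T)⁻¹) * T := by
        rw [Matrix.mul_sub, Matrix.sub_mul, hTi, Matrix.one_mul]
        abel
      rwa [heq]
    · have h := hS.inv.posSemidef.mul_mul_conjTranspose_same T
      rw [hTh.eq] at h
      have heq : (M + T) - (M + T - T * (J + T)⁻¹ * T) = T * (J + T)⁻¹ * T := by
        abel
      rwa [heq]
end

section
/- Let M, T be symmetric positive definite and f(J) = M + T − T(J + T)⁻¹T. If J ⪰ 0 satisfies M ⪰ (J⁻¹ T J⁻¹ + J⁻¹)⁻¹ (with J positive definite), then f(J) ⪰ J. -/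
open Matrix

/-!
Both sides are congruent to `J + T` through `J⁻¹`: `J⁻¹ T J⁻¹ + J⁻¹ = J⁻¹ (J + T) J⁻¹`, so
`(J⁻¹ T J⁻¹ + J⁻¹)⁻¹ = J (J + T)⁻¹ J`, and expanding `J = (J + T) - T` gives
`J (J + T)⁻¹ J = J - T + T (J + T)⁻¹ T`. Hence `f(J) - J = M - (J⁻¹ T J⁻¹ + J⁻¹)⁻¹` exactly,
and the condition is the conclusion.
-/

namespace Matrix

variable {n R : Type*} [Fintype n] [DecidableEq n] [CommRing R]

theorem inv_mul_mul_inv_add_inv {J : Matrix n n R} (hJ : IsUnit J.det) (T : Matrix n n R) :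
    J⁻¹ * T * J⁻¹ + J⁻¹ = J⁻¹ * (J + T) * J⁻¹ := by
  rw [Matrix.mul_add, Matrix.add_mul, nonsing_inv_mul J hJ, Matrix.one_mul, add_comm]

theorem inv_inv_mul_mul_inv {J : Matrix n n R} (hJ : IsUnit J.det) (A : Matrix n n R) :
    (J⁻¹ * A * J⁻¹)⁻¹ = J * A⁻¹ * J := by
  rw [Matrix.mul_inv_rev, Matrix.mul_inv_rev, nonsing_inv_nonsing_inv J hJ, Matrix.mul_assoc]

theorem sub_mul_inv_mul_sub {A : Matrix n n R} (hA : IsUnit A.det) (T : Matrix n n R) :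
    (A - T) * A⁻¹ * (A - T) = A - T - T + T * A⁻¹ * T := by
  simp only [Matrix.sub_mul, Matrix.mul_sub, mul_nonsing_inv A hA, Matrix.one_mul,
    Matrix.mul_assoc, nonsing_inv_mul A hA, Matrix.mul_one]
  abel

theorem mul_inv_add_mul_eq {J T : Matrix n n R} (hJT : IsUnit (J + T).det) :
    J * (J + T)⁻¹ * J = J - T + T * (J + T)⁻¹ * T := by
  simpa only [add_sub_cancel_right] using sub_mul_inv_mul_sub hJT T

theorem add_sub_mul_inv_add_mul_sub_eq {J T : Matrix n n R} (hJ : IsUnit J.det)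
    (hJT : IsUnit (J + T).det) (M : Matrix n n R) :
    M + T - T * (J + T)⁻¹ * T - J = M - (J⁻¹ * T * J⁻¹ + J⁻¹)⁻¹ := by
  rw [inv_mul_mul_inv_add_inv hJ, inv_inv_mul_mul_inv hJ, mul_inv_add_mul_eq hJT]
  abel

end Matrix

theorem stmt11_general {n : ℕ} (M T J : Matrix (Fin n) (Fin n) ℝ)
    (hT : T.PosDef) (hJ : J.PosDef)
    (hcond : (M - (J⁻¹ * T * J⁻¹ + J⁻¹)⁻¹).PosSemidef) :
    ((M + T - T * (J + T)⁻¹ * T) - J).PosSemidef := by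
  have hJdet : IsUnit J.det := hJ.det_pos.ne'.isUnit
  have hJTdet : IsUnit (J + T).det := (hJ.add hT).det_pos.ne'.isUnit
  rwa [add_sub_mul_inv_add_mul_sub_eq hJdet hJTdet]

/-- Convergence condition of the recursive LocTrack system: for `M`, `T`, `J`
symmetric positive definite, if `M ⪰ (J⁻¹ T J⁻¹ + J⁻¹)⁻¹` then
`f(J) = M + T − T (J + T)⁻¹ T ⪰ J`. -/
theorem stmt11 {n : ℕ} (M T J : Matrix (Fin n) (Fin n) ℝ)
    (hM : M.PosDef) (hT : T.PosDef) (hJ : J.PosDef)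
    (hcond : (M - (J⁻¹ * T * J⁻¹ + J⁻¹)⁻¹).PosSemidef) :
    ((M + T - T * (J + T)⁻¹ * T) - J).PosSemidef :=
  stmt11_general M T J hT hJ hcond
end

section
/- Let M₁,...,M_K be symmetric positive definite 2×2 matrices and consider the K-block matrix J(s) = BlockDiag[M_k] + s·L, where L is the block Laplacian of the complete graph with unit edge weights (i.e., [L]_{k,k} = (K−1)I₂, [L]_{k,j} = −I₂ for j ≠ k). Then as s → ∞, the equivalent information of block K, ([J(s)⁻¹]_{K,K})⁻¹, converges to ∑_{k=1}^K M_k. -/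
/-!
Put `t = s·|ι|` and let `W` be the vertical stack of `|ι|` identity blocks. Then
`J(s) = blockDiag(t • (t⁻¹ M_k + 1)) - s W Wᵀ`, and the Woodbury identity turns the `(k₀, k₀)` block
of `J(s)⁻¹` into `t⁻¹ Q_{k₀} + Q_{k₀} (∑ₖ Q_k M_k)⁻¹ Q_{k₀}` with `Q_k = (t⁻¹ M_k + 1)⁻¹`, using
`Q_k = 1 - t⁻¹ Q_k M_k` to simplify the capacitance matrix. As `t → ∞` every `Q_k → 1`, so the
block tends to `(∑ₖ M_k)⁻¹`.
-/

open Matrix Filter Topology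

theorem Filter.Tendsto.matrix_inv {α n 𝕜 : Type*} [Fintype n] [DecidableEq n] [Field 𝕜]
    [TopologicalSpace 𝕜] [IsTopologicalRing 𝕜] [ContinuousInv₀ 𝕜] {l : Filter α}
    {f : α → Matrix n n 𝕜} {A : Matrix n n 𝕜} (h : Tendsto f l (𝓝 A)) (hA : IsUnit A.det) :
    Tendsto (fun x => (f x)⁻¹) l (𝓝 A⁻¹) :=
  (continuousAt_matrix_inv A (by
    simpa only [Ring.inverse_eq_inv'] using continuousAt_inv₀ hA.ne_zero)).tendsto.comp h

theorem Filter.Tendsto.eventually_isUnit_det {α n 𝕜 : Type*} [Fintype n] [DecidableEq n]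
    [Field 𝕜] [TopologicalSpace 𝕜] [IsTopologicalRing 𝕜] [T1Space 𝕜] {l : Filter α}
    {f : α → Matrix n n 𝕜} {A : Matrix n n 𝕜} (h : Tendsto f l (𝓝 A)) (hA : IsUnit A.det) :
    ∀ᶠ x in l, IsUnit (f x).det :=
  ((continuous_id.matrix_det.tendsto A).comp h |>.eventually_ne hA.ne_zero).mono
    fun _ => isUnit_iff_ne_zero.2

namespace BlockLaplacian

lemma submatrix_blockDiagonal {ι n α : Type*} [DecidableEq ι] [Zero α] (f : ι → Matrix n n α)
    (k : ι) :
    (blockDiagonal f).submatrix (·, k) (·, k) = f k :=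
  ext fun i j => blockDiagonal_apply_eq f i j k

variable {ι n 𝕜 : Type*} [Fintype ι] [Fintype n] [DecidableEq n] [Field 𝕜]

lemma inv_smul_of_ne_zero {c : 𝕜} (hc : c ≠ 0) (A : Matrix n n 𝕜) : (c • A)⁻¹ = c⁻¹ • A⁻¹ := by
  by_cases hA : IsUnit A.det
  · simpa [Units.smul_def] using inv_smul' A (Units.mk0 c hc) hA
  · have hcA : ¬IsUnit (c • A).det := by
      simpa [det_smul, hc] using hA
    rw [nonsing_inv_apply_not_isUnit _ hA, nonsing_inv_apply_not_isUnit _ hcA, smul_zero]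

lemma inv_smul_add_one (M : Matrix n n 𝕜) {c : 𝕜} (hM : IsUnit (c • M + 1).det) :
    (c • M + 1)⁻¹ = 1 - c • ((c • M + 1)⁻¹ * M) := by
  rw [eq_sub_iff_add_eq, ← Matrix.mul_smul, ← Matrix.mul_one (c • M + 1)⁻¹, Matrix.mul_assoc,
    Matrix.one_mul, ← Matrix.mul_add, add_comm 1, Matrix.nonsing_inv_mul _ hM]

lemma neg_inv_smul_one_add_sum_inv_smul {M : ι → Matrix n n 𝕜} {s t : 𝕜}
    (hst : s * Fintype.card ι = t) (ht : t ≠ 0) (hM : ∀ k, IsUnit (t⁻¹ • M k + 1).det) :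
    -s⁻¹ • 1 + ∑ k, t⁻¹ • (t⁻¹ • M k + 1)⁻¹ = -(t ^ 2)⁻¹ • ∑ k, (t⁻¹ • M k + 1)⁻¹ * M k := by
  have hc : (Fintype.card ι : 𝕜) ≠ 0 := right_ne_zero_of_mul (hst ▸ ht)
  rw [Finset.sum_congr rfl fun k _ => by rw [inv_smul_add_one (M k) (hM k)], ← Finset.smul_sum,
    Finset.sum_sub_distrib, Finset.sum_const, Finset.card_univ, ← Finset.smul_sum,
    ← Nat.cast_smul_eq_nsmul 𝕜, ← hst]
  match_scalars
  · field_simp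
    ring
  · field_simp

variable [DecidableEq ι]

lemma inv_blockDiagonal {f : ι → Matrix n n 𝕜} (hf : ∀ k, IsUnit (f k).det) :
    (blockDiagonal f)⁻¹ = blockDiagonal fun k => (f k)⁻¹ := by
  refine inv_eq_right_inv ?_
  rw [← blockDiagonal_mul]
  simp_rw [mul_nonsing_inv _ (hf _)]
  exact blockDiagonal_one

lemma isUnit_blockDiagonal {f : ι → Matrix n n 𝕜} (hf : ∀ k, IsUnit (f k).det) :
    IsUnit (blockDiagonal f) := by
  rw [isUnit_iff_isUnit_det, det_blockDiagonal]
  exact IsUnit.prod_univ_iff.mpr hf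

variable (ι n 𝕜) in
def blockOnes : Matrix (n × ι) n 𝕜 := of fun p j => (1 : Matrix n n 𝕜) p.1 j

variable (ι n 𝕜) in
/-- The block Laplacian `L_{K_ι} ⊗ I_n` of the complete graph on `ι`, with the block index second
as in `Matrix.blockDiagonal`. -/
def completeLaplacian : Matrix (n × ι) (n × ι) 𝕜 :=
  (Fintype.card ι : 𝕜) • 1 - blockOnes ι n 𝕜 * (blockOnes ι n 𝕜)ᵀ

lemma completeLaplacian_apply (i j : n) (k l : ι) :
    completeLaplacian ι n 𝕜 (i, k) (j, l) =
      (if k = l then (Fintype.card ι : 𝕜) - 1 else -1) * (1 : Matrix n n 𝕜) i j := by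
  simp [completeLaplacian, blockOnes, mul_apply, one_apply]
  split_ifs <;> simp_all

lemma blockOnes_transpose_mul_blockDiagonal_mul (f : ι → Matrix n n 𝕜) :
    (blockOnes ι n 𝕜)ᵀ * blockDiagonal f * blockOnes ι n 𝕜 = ∑ k, f k := by
  ext i j
  simp [blockOnes, mul_apply, blockDiagonal_apply, Fintype.sum_prod_type, one_apply,
    Matrix.sum_apply]

lemma submatrix_blockDiagonal_mul_blockOnes (f : ι → Matrix n n 𝕜) (k : ι) :
    (blockDiagonal f * blockOnes ι n 𝕜).submatrix (·, k) id = f k := by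
  ext i j
  simp [blockOnes, mul_apply, blockDiagonal_apply, Fintype.sum_prod_type, one_apply]

lemma submatrix_blockOnes_transpose_mul_blockDiagonal (f : ι → Matrix n n 𝕜) (k : ι) :
    ((blockOnes ι n 𝕜)ᵀ * blockDiagonal f).submatrix id (·, k) = f k := by
  ext i j
  simp [blockOnes, mul_apply, blockDiagonal_apply, Fintype.sum_prod_type, one_apply]

lemma submatrix_inv_blockDiagonal_add_blockOnes_mul_mul {f : ι → Matrix n n 𝕜}
    (hf : ∀ k, IsUnit (f k).det) {C : Matrix n n 𝕜} (hC : IsUnit C)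
    (hS : IsUnit (C⁻¹ + ∑ k, (f k)⁻¹)) (k : ι) :
    ((blockDiagonal f + blockOnes ι n 𝕜 * C * (blockOnes ι n 𝕜)ᵀ)⁻¹).submatrix (·, k) (·, k) =
      (f k)⁻¹ - (f k)⁻¹ * (C⁻¹ + ∑ k, (f k)⁻¹)⁻¹ * (f k)⁻¹ := by
  have hsum := blockOnes_transpose_mul_blockDiagonal_mul (𝕜 := 𝕜) fun k => (f k)⁻¹
  rw [← inv_blockDiagonal hf] at hsum
  rw [add_mul_mul_inv_eq_sub _ _ _ _ (isUnit_blockDiagonal hf) hC (by rwa [hsum]), hsum,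
    submatrix_sub, Pi.sub_apply, Pi.sub_apply, Matrix.mul_assoc _ (blockOnes ι n 𝕜)ᵀ,
    submatrix_mul _ _ _ id _ Function.bijective_id, submatrix_mul _ _ _ id _ Function.bijective_id,
    inv_blockDiagonal hf, submatrix_blockDiagonal_mul_blockOnes,
    submatrix_blockOnes_transpose_mul_blockDiagonal, submatrix_blockDiagonal, submatrix_id_id]

lemma blockDiagonal_add_smul_completeLaplacian (M : ι → Matrix n n 𝕜) {s t : 𝕜}
    (hst : s * Fintype.card ι = t) :
    blockDiagonal M + s • completeLaplacian ι n 𝕜 =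
      blockDiagonal (fun k => M k + t • 1) +
        blockOnes ι n 𝕜 * (-s • 1 : Matrix n n 𝕜) * (blockOnes ι n 𝕜)ᵀ := by
  rw [completeLaplacian, ← hst, show (fun k => M k + (s * Fintype.card ι) • 1) =
    M + (s * Fintype.card ι : 𝕜) • (1 : ι → Matrix n n 𝕜) from rfl, blockDiagonal_add,
    blockDiagonal_smul, blockDiagonal_one, Matrix.mul_smul, Matrix.mul_one, Matrix.smul_mul,
    smul_sub, smul_smul, neg_smul, sub_eq_add_neg, add_assoc]

lemma submatrix_inv_blockDiagonal_add_smul_completeLaplacian {M : ι → Matrix n n 𝕜} {s t : 𝕜}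
    (hst : s * Fintype.card ι = t) (ht : t ≠ 0) (hM : ∀ k, IsUnit (t⁻¹ • M k + 1).det)
    (hS : IsUnit (∑ k, (t⁻¹ • M k + 1)⁻¹ * M k).det) (k₀ : ι) :
    ((blockDiagonal M + s • completeLaplacian ι n 𝕜)⁻¹).submatrix (·, k₀) (·, k₀) =
      t⁻¹ • (t⁻¹ • M k₀ + 1)⁻¹ +
        (t⁻¹ • M k₀ + 1)⁻¹ * (∑ k, (t⁻¹ • M k + 1)⁻¹ * M k)⁻¹ * (t⁻¹ • M k₀ + 1)⁻¹ := by
  have hs : s ≠ 0 := left_ne_zero_of_mul (hst ▸ ht)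
  have hshift : (fun k => M k + t • 1) = fun k => t • (t⁻¹ • M k + 1) := by
    funext k
    rw [smul_add, smul_smul, mul_inv_cancel₀ ht, one_smul]
  have hblock : ∀ k, IsUnit (t • (t⁻¹ • M k + 1)).det := fun k => by
    rw [det_smul]
    exact (isUnit_iff_ne_zero.2 (pow_ne_zero _ ht)).mul (hM k)
  have hCinv : (-s • 1 : Matrix n n 𝕜)⁻¹ = -s⁻¹ • 1 := by
    rw [inv_smul_of_ne_zero (neg_ne_zero.2 hs), inv_one, inv_neg]
  have hcoupling := neg_inv_smul_one_add_sum_inv_smul hst ht hM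
  rw [blockDiagonal_add_smul_completeLaplacian M hst, hshift,
    submatrix_inv_blockDiagonal_add_blockOnes_mul_mul hblock ?_ ?_ k₀]
  · simp_rw [inv_smul_of_ne_zero ht]
    rw [hCinv, hcoupling, inv_smul_of_ne_zero (by simp [ht]), inv_neg, inv_inv]
    simp only [Matrix.smul_mul, Matrix.mul_smul, smul_smul]
    rw [show t⁻¹ * (-t ^ 2 * t⁻¹) = -1 by field_simp, neg_one_smul, sub_neg_eq_add]
  · rw [isUnit_iff_isUnit_det, det_smul, det_one, mul_one]
    exact (isUnit_iff_ne_zero.2 (neg_ne_zero.2 hs)).pow _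
  · simp_rw [inv_smul_of_ne_zero ht]
    rw [hCinv, hcoupling, isUnit_iff_isUnit_det, det_smul]
    exact (isUnit_iff_ne_zero.2 (by simp [ht])).pow _ |>.mul hS

lemma tendsto_inv_inv_smul_add_one (M : Matrix n n ℝ) :
    Tendsto (fun t : ℝ => (t⁻¹ • M + 1)⁻¹) atTop (𝓝 1) := by
  have h := ((tendsto_inv_atTop_zero (𝕜 := ℝ)).smul_const M).add_const (1 : Matrix n n ℝ)
  rw [zero_smul, zero_add] at h
  simpa using h.matrix_inv (by simp)

theorem tendsto_inv_submatrix_inv_blockDiagonal_add_smul_completeLaplacian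
    {M : ι → Matrix n n ℝ} (hM : IsUnit (∑ k, M k).det) (k₀ : ι) :
    Tendsto (fun s : ℝ =>
        (((blockDiagonal M + s • completeLaplacian ι n ℝ)⁻¹).submatrix (·, k₀) (·, k₀))⁻¹)
      atTop (𝓝 (∑ k, M k)) := by
  have hQ := fun k => tendsto_inv_inv_smul_add_one (M k)
  have hS : Tendsto (fun t : ℝ => ∑ k, (t⁻¹ • M k + 1)⁻¹ * M k) atTop (𝓝 (∑ k, M k)) := by
    simpa using tendsto_finsetSum Finset.univ fun k _ => (hQ k).mul_const (M k)
  have hlim : Tendsto (fun t : ℝ => t⁻¹ • (t⁻¹ • M k₀ + 1)⁻¹ +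
      (t⁻¹ • M k₀ + 1)⁻¹ * (∑ k, (t⁻¹ • M k + 1)⁻¹ * M k)⁻¹ * (t⁻¹ • M k₀ + 1)⁻¹)
      atTop (𝓝 (∑ k, M k)⁻¹) := by
    simpa using (tendsto_inv_atTop_zero.smul (hQ k₀)).add
      (((hQ k₀).mul (hS.matrix_inv hM)).mul (hQ k₀))
  have hgood : ∀ᶠ t : ℝ in atTop, t ≠ 0 ∧ (∀ k, IsUnit (t⁻¹ • M k + 1).det) ∧
      IsUnit (∑ k, (t⁻¹ • M k + 1)⁻¹ * M k).det := by
    refine (eventually_ne_atTop 0).and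
      ((eventually_all.2 fun k => ?_).and (hS.eventually_isUnit_det hM))
    filter_upwards [(hQ k).eventually_isUnit_det (by simp)] with t ht
    exact isUnit_nonsing_inv_det_iff.1 ht
  have hscale : Tendsto (fun s : ℝ => s * Fintype.card ι) atTop atTop :=
    tendsto_id.atTop_mul_const (Nat.cast_pos.2 (Fintype.card_pos_iff.2 ⟨k₀⟩))
  have hblock := (hlim.comp hscale).congr' <| (hscale.eventually hgood).mono
    fun s ⟨ht, hMt, hSt⟩ =>
      (submatrix_inv_blockDiagonal_add_smul_completeLaplacian rfl ht hMt hSt k₀).symm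
  simpa [nonsing_inv_nonsing_inv _ hM] using hblock.matrix_inv (isUnit_nonsing_inv_det _ hM)

end BlockLaplacian

/-- Infinitely strong spatial correlation superimposes measurement information:
for `J(s) = BlockDiag[M_k] + s·L`, with `L` the block Laplacian of the complete graph,
the equivalent information of the last block tends to `∑ₖ M_k` as `s → ∞`. -/
theorem stmt16 {K : ℕ} (hK : 0 < K) (M : Fin K → Matrix (Fin 2) (Fin 2) ℝ)
    (hM : ∀ k, (M k).PosDef) :
    Filter.Tendsto
      (fun s : ℝ =>
        (Matrix.of fun i j : Fin 2 =>
          ((Matrix.of fun p q : Fin K × Fin 2 =>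
              (if p.1 = q.1 then M p.1 p.2 q.2 else 0) +
              s * (if p.1 = q.1 then ((K : ℝ) - 1) * (if p.2 = q.2 then 1 else 0)
                   else -(if p.2 = q.2 then (1 : ℝ) else 0)))⁻¹)
            ((⟨K - 1, Nat.sub_lt hK Nat.one_pos⟩ : Fin K), i)
            ((⟨K - 1, Nat.sub_lt hK Nat.one_pos⟩ : Fin K), j))⁻¹)
      Filter.atTop (nhds (∑ k, M k)) := by
  have hJ : ∀ s : ℝ, (Matrix.of fun p q : Fin K × Fin 2 =>
      (if p.1 = q.1 then M p.1 p.2 q.2 else 0) +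
      s * (if p.1 = q.1 then ((K : ℝ) - 1) * (if p.2 = q.2 then 1 else 0)
           else -(if p.2 = q.2 then (1 : ℝ) else 0))) =
      (blockDiagonal M + s • BlockLaplacian.completeLaplacian (Fin K) (Fin 2) ℝ).submatrix
        (Equiv.prodComm _ _) (Equiv.prodComm _ _) := by
    intro s
    ext ⟨k, i⟩ ⟨l, j⟩
    simp [BlockLaplacian.completeLaplacian_apply, blockDiagonal_apply, one_apply]
    split_ifs <;> ring
  have hsum : IsUnit (∑ k, M k).det :=
    (isUnit_iff_isUnit_det _).1 (posDef_sum ⟨⟨0, hK⟩, Finset.mem_univ _⟩ fun k _ => hM k).isUnit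
  simp_rw [hJ, inv_submatrix_equiv]
  exact BlockLaplacian.tendsto_inv_submatrix_inv_blockDiagonal_add_smul_completeLaplacian hsum _
end

section
/- Let J_t be defined recursively by J_t = M + T − T(J_{t−1} + T)⁻¹T with J_0 = M, where M, T are symmetric positive definite. Then the sequence (J_t) is monotone nondecreasing in the Loewner order, bounded above by M + T, and converges to the unique positive definite solution X of X = M + T − T(X + T)⁻¹T. -/
/-!
Write `F J = M + T - T (J + T)⁻¹ T`. Inversion is antitone on positive definite matrices (a
Schur-complement argument), so `F` is monotone on positive semidefinite matrices and
`M ≤ F J ≤ M + T` there. Hence `J_t` increases and stays below `M + T`; its quadratic forms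
converge, so by polarization `J_t` converges, and by continuity of `F` the limit is a fixed point.

For uniqueness, a positive semidefinite fixed point `Y` makes `Q = Y - M ≥ 0` a solution of the
algebraic Riccati equation `Q + Q M⁻¹ Q = T`. With `R = M^{-1/2} Q M^{-1/2}` this reads
`(2R + 1)² = 4 M^{-1/2} T M^{-1/2} + 1`, so `2R + 1` is the nonnegative square root of a matrix
that does not depend on `Y`.
-/

open Matrix Filter Topology
open scoped MatrixOrder ComplexOrder

theorem eq_of_add_mul_self_eq {A : Type*} [Ring A] [PartialOrder A] [StarRing A]
    [TopologicalSpace A] [Algebra ℝ A] [StarOrderedRing A]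
    [ContinuousFunctionalCalculus ℝ A IsSelfAdjoint] [NonnegSpectrumClass ℝ A]
    [IsTopologicalRing A] [T2Space A] {a b : A} (ha : 0 ≤ a) (hb : 0 ≤ b)
    (h : a + a * a = b + b * b) : a = b := by
  have hsq {c : A} (hc : 0 ≤ c) : CFC.sqrt (4 * (c + c * c) + 1) = c + c + 1 :=
    CFC.sqrt_unique (by noncomm_ring) (add_nonneg (add_nonneg hc hc) zero_le_one)
  have h2 : (2 : ℝ) • a = (2 : ℝ) • b := by
    simpa only [two_smul] using add_right_cancel ((hsq ha).symm.trans (h ▸ hsq hb))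
  exact smul_right_injective A two_ne_zero h2

namespace Matrix

section RCLike

variable {ι 𝕜 : Type*} [Fintype ι] [RCLike 𝕜]

theorem isClosed_setOf_posSemidef : IsClosed {A : Matrix ι ι 𝕜 | A.PosSemidef} := by
  simp only [posSemidef_iff_dotProduct_mulVec, Set.ofPred_and, Set.ofPred_forall]
  refine .inter (isClosed_eq continuous_id.matrix_conjTranspose continuous_id) ?_
  exact isClosed_iInter fun x => isClosed_le continuous_const
    (continuous_const.dotProduct (continuous_id.matrix_mulVec continuous_const))

instance : OrderClosedTopology (Matrix ι ι 𝕜) where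
  isClosed_le' := isClosed_le_of_isClosed_nonneg <| by
    simpa only [nonneg_iff_posSemidef] using isClosed_setOf_posSemidef

variable [DecidableEq ι]

theorem PosDef.inv_le_inv {A B : Matrix ι ι 𝕜} (hA : A.PosDef) (hAB : A ≤ B) : B⁻¹ ≤ A⁻¹ := by
  have hB : B.PosDef := by simpa using hA.add_posSemidef (le_iff.mp hAB)
  let _ := hA.inv.isUnit.invertible
  let _ := hB.isUnit.invertible
  -- `B - A` and `A⁻¹ - B⁻¹` are the two Schur complements of `[[B, 1], [1, A⁻¹]]`
  have hblock : (fromBlocks B 1 1ᴴ A⁻¹).PosSemidef :=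
    (PosDef.fromBlocks₂₂ B 1 hA.inv).2 <| by
      simpa [le_iff, nonsing_inv_nonsing_inv _ hA.det_pos.ne'.isUnit] using hAB
  simpa [le_iff] using (PosDef.fromBlocks₁₁ 1 A⁻¹ hB).1 hblock

theorem eq_of_add_mul_inv_mul_eq {M P Q : Matrix ι ι 𝕜} (hM : M.PosDef) (hP : 0 ≤ P)
    (hQ : 0 ≤ Q) (h : P + P * M⁻¹ * P = Q + Q * M⁻¹ * Q) : P = Q := by
  set r := CFC.sqrt M⁻¹
  have hM' : 0 ≤ M⁻¹ := hM.inv.posSemidef.nonneg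
  have hrr : r * r = M⁻¹ := CFC.sqrt_mul_sqrt_self _ hM'
  have hr : IsSelfAdjoint r := .of_nonneg (CFC.sqrt_nonneg _)
  have hru : IsUnit r := (CFC.isUnit_sqrt_iff _ hM').2 hM.inv.isUnit
  have hconj (S : Matrix ι ι 𝕜) :
      r * S * r + r * S * r * (r * S * r) = r * (S + S * M⁻¹ * S) * r := by
    rw [← hrr]; noncomm_ring
  have : r * P * r = r * Q * r := eq_of_add_mul_self_eq (hr.conjugate_nonneg hP)
    (hr.conjugate_nonneg hQ) (by rw [hconj, hconj, h])
  exact hru.mul_left_cancel (hru.mul_right_cancel this)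

end RCLike

section Real

variable {ι : Type*} [Fintype ι]

theorem IsHermitian.apply_eq_polarization [DecidableEq ι] {A : Matrix ι ι ℝ}
    (hA : A.IsHermitian) (i j : ι) :
    A i j = ((Pi.single i 1 + Pi.single j 1) ⬝ᵥ A *ᵥ (Pi.single i 1 + Pi.single j 1)
      - Pi.single i 1 ⬝ᵥ A *ᵥ Pi.single i 1 - Pi.single j 1 ⬝ᵥ A *ᵥ Pi.single j 1) / 2 := by
  have hji : A j i = A i j := by simpa using hA.apply i j
  simp only [mulVec_add, dotProduct_add, add_dotProduct, mulVec_single_one, single_one_dotProduct,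
    col_apply, hji]
  ring

theorem monotone_dotProduct_mulVec (x : ι → ℝ) :
    Monotone fun A : Matrix ι ι ℝ => x ⬝ᵥ A *ᵥ x := by
  intro A B hAB
  simpa [sub_mulVec] using (le_iff.mp hAB).dotProduct_mulVec_nonneg x

theorem exists_tendsto_of_monotone_of_le [DecidableEq ι] {A : ℕ → Matrix ι ι ℝ}
    {B : Matrix ι ι ℝ} (hA : Monotone A) (hB : ∀ t, A t ≤ B) : ∃ X, Tendsto A atTop (𝓝 X) := by
  let D (t : ℕ) := A t - A 0
  have hD : Monotone D := fun s t hst => sub_le_sub_right (hA hst) _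
  have hconv (x : ι → ℝ) : ∃ l, Tendsto (fun t => x ⬝ᵥ D t *ᵥ x) atTop (𝓝 l) :=
    ⟨_, tendsto_atTop_ciSup ((monotone_dotProduct_mulVec x).comp hD) ⟨_,
      Set.forall_mem_range.2 fun t => monotone_dotProduct_mulVec x (sub_le_sub_right (hB t) _)⟩⟩
  choose L hL using hconv
  have hDherm (t : ℕ) : (D t).IsHermitian := (le_iff.mp (hA (Nat.zero_le t))).isHermitian
  let X : Matrix ι ι ℝ := of fun i j =>
    (L (Pi.single i 1 + Pi.single j 1) - L (Pi.single i 1) - L (Pi.single j 1)) / 2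
  suffices Tendsto D atTop (𝓝 X) from ⟨A 0 + X, by simpa [D] using this.const_add (A 0)⟩
  refine tendsto_pi_nhds.2 fun i => tendsto_pi_nhds.2 fun j => ?_
  simp_rw [(hDherm _).apply_eq_polarization i j]
  exact (((hL _).sub (hL _)).sub (hL _)).div_const 2

end Real

end Matrix

section Riccati

variable {ι 𝕜 : Type*} [Fintype ι] [DecidableEq ι] [RCLike 𝕜] {M T A B X Y : Matrix ι ι 𝕜}

noncomputable def riccatiMap (M T A : Matrix ι ι 𝕜) : Matrix ι ι 𝕜 := M + T - T * (A + T)⁻¹ * T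

theorem Matrix.PosDef.mul_inv_add_mul_le (hT : T.PosDef) (hA : 0 ≤ A) :
    T * (A + T)⁻¹ * T ≤ T := by
  have := hT.isHermitian.isSelfAdjoint.conjugate_le_conjugate
    (hT.inv_le_inv (le_add_of_nonneg_left hA))
  rwa [mul_nonsing_inv _ hT.det_pos.ne'.isUnit, one_mul] at this

theorem riccatiMap_mono (hT : T.PosDef) (hA : 0 ≤ A) (hAB : A ≤ B) :
    riccatiMap M T A ≤ riccatiMap M T B :=
  sub_le_sub_left (hT.isHermitian.isSelfAdjoint.conjugate_le_conjugate
    ((PosDef.posSemidef_add hA.posSemidef hT).inv_le_inv (add_le_add_left hAB T))) _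

theorem le_riccatiMap (hT : T.PosDef) (hA : 0 ≤ A) : M ≤ riccatiMap M T A := by
  simpa [riccatiMap, add_sub_assoc] using hT.mul_inv_add_mul_le hA

theorem riccatiMap_le (hT : T.PosDef) (hA : 0 ≤ A) : riccatiMap M T A ≤ M + T :=
  sub_le_self _ (hT.isHermitian.isSelfAdjoint.conjugate_nonneg
    (PosDef.posSemidef_add hA.posSemidef hT).inv.posSemidef.nonneg)

theorem continuousAt_riccatiMap (hAT : IsUnit (A + T).det) : ContinuousAt (riccatiMap M T) A := by
  have hinv : ContinuousAt (fun K : Matrix ι ι 𝕜 => (K + T)⁻¹) A :=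
    (continuousAt_matrix_inv _ (NormedRing.inverse_continuousAt hAT.unit)).comp (f := (· + T))
      (continuous_add_const T).continuousAt
  exact continuousAt_const.sub ((continuousAt_const.mul hinv).mul continuousAt_const)

theorem sub_add_sub_mul_inv_mul_sub_eq_of_riccatiMap_eq_self (hM : M.PosDef) (hT : T.PosDef)
    (hY : 0 ≤ Y) (hfix : riccatiMap M T Y = Y) : (Y - M) + (Y - M) * M⁻¹ * (Y - M) = T := by
  have hMY : M ≤ Y := hfix ▸ le_riccatiMap hT hY
  have hYpd : Y.PosDef := by simpa using hM.add_posSemidef (le_iff.mp hMY)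
  have hM' := hM.det_pos.ne'.isUnit
  have hT' := hT.det_pos.ne'.isUnit
  have hS' := (hYpd.add hT).det_pos.ne'.isUnit
  have hfix' : (M + T - Y) * T⁻¹ * (Y + T) = T := by
    nth_rewrite 1 [← hfix]
    rw [riccatiMap, sub_sub_cancel, mul_nonsing_inv_cancel_right _ _ hT',
      nonsing_inv_mul_cancel_right _ _ hS']
  have hexpand : (M + T - Y) * T⁻¹ * (Y + T) = M + T - (Y - M) * T⁻¹ * Y := by
    calc _ = (M - Y) * (T⁻¹ * T) + T * T⁻¹ * Y + T * (T⁻¹ * T) - (Y - M) * T⁻¹ * Y := by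
          noncomm_ring
      _ = _ := by rw [mul_nonsing_inv _ hT', nonsing_inv_mul _ hT']; noncomm_ring
  have hQY : (Y - M) * T⁻¹ * Y = M := by
    rw [hexpand, sub_eq_iff_eq_add'] at hfix'
    exact (add_right_cancel hfix').symm
  have hinv : Y * M⁻¹ * (Y - M) * T⁻¹ = 1 := by
    refine (isUnit_iff_isUnit_det Y).mpr hYpd.det_pos.ne'.isUnit |>.mul_right_cancel ?_
    rw [one_mul, show Y * M⁻¹ * (Y - M) * T⁻¹ * Y = Y * M⁻¹ * ((Y - M) * T⁻¹ * Y) by noncomm_ring,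
      hQY, nonsing_inv_mul_cancel_right _ _ hM']
  calc (Y - M) + (Y - M) * M⁻¹ * (Y - M) = (Y - M) * M⁻¹ * (Y - M) + M * M⁻¹ * (Y - M) := by
        rw [mul_nonsing_inv _ hM', one_mul, add_comm]
    _ = Y * M⁻¹ * (Y - M) * T⁻¹ * T := by
        rw [nonsing_inv_mul_cancel_right _ _ hT']; noncomm_ring
    _ = T := by rw [hinv, one_mul]

theorem eq_of_riccatiMap_eq_self (hM : M.PosDef) (hT : T.PosDef) (hX : 0 ≤ X) (hY : 0 ≤ Y)
    (hXfix : riccatiMap M T X = X) (hYfix : riccatiMap M T Y = Y) : X = Y :=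
  sub_left_injective <| Matrix.eq_of_add_mul_inv_mul_eq hM
    (sub_nonneg.2 (hXfix ▸ le_riccatiMap hT hX)) (sub_nonneg.2 (hYfix ▸ le_riccatiMap hT hY))
    ((sub_add_sub_mul_inv_mul_sub_eq_of_riccatiMap_eq_self hM hT hX hXfix).trans
      (sub_add_sub_mul_inv_mul_sub_eq_of_riccatiMap_eq_self hM hT hY hYfix).symm)

variable {J : ℕ → Matrix ι ι 𝕜}

theorem riccatiMap_eq_self_of_tendsto (hrec : ∀ t, J (t + 1) = riccatiMap M T (J t))
    (hJ : Tendsto J atTop (𝓝 X)) (hX : IsUnit (X + T).det) : riccatiMap M T X = X :=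
  tendsto_nhds_unique (((continuousAt_riccatiMap hX).tendsto.comp hJ).congr fun t => (hrec t).symm)
    ((tendsto_add_atTop_iff_nat 1).2 hJ)

variable (hM : 0 ≤ M) (hT : T.PosDef) (hJ0 : J 0 = M)
  (hrec : ∀ t, J (t + 1) = riccatiMap M T (J t))
include hM hT hJ0 hrec

theorem le_riccati_iterate (t : ℕ) : M ≤ J t := by
  induction t with
  | zero => exact hJ0.ge
  | succ t ih => exact hrec t ▸ le_riccatiMap hT (hM.trans ih)

theorem monotone_riccati_iterate : Monotone J := by
  refine monotone_nat_of_le_succ fun t => ?_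
  induction t with
  | zero =>
    rw [hrec 0, hJ0]
    exact le_riccatiMap hT hM
  | succ t ih =>
    rw [hrec (t + 1)]
    conv_lhs => rw [hrec t]
    exact riccatiMap_mono hT (hM.trans (le_riccati_iterate hM hT hJ0 hrec t)) ih

theorem riccati_iterate_le (t : ℕ) : J t ≤ M + T :=
  (monotone_riccati_iterate hM hT hJ0 hrec t.le_succ).trans
    (hrec t ▸ riccatiMap_le hT (hM.trans (le_riccati_iterate hM hT hJ0 hrec t)))

end Riccati

/-- Monotone convergence of the recursive EFIM: with `J₀ = M` and
`J_{t+1} = M + T − T (J_t + T)⁻¹ T` for symmetric positive definite `M`, `T`,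
the sequence is nondecreasing in the Loewner order, bounded above by `M + T`, and
converges to the unique positive definite solution of the fixed-point equation. -/
theorem stmt17 {n : ℕ} (M T : Matrix (Fin n) (Fin n) ℝ)
    (hM : M.PosDef) (hT : T.PosDef)
    (J : ℕ → Matrix (Fin n) (Fin n) ℝ) (hJ0 : J 0 = M)
    (hrec : ∀ t, J (t + 1) = M + T - T * (J t + T)⁻¹ * T) :
    (∀ t, (J (t + 1) - J t).PosSemidef) ∧
    (∀ t, (M + T - J t).PosSemidef) ∧
    ∃ X : Matrix (Fin n) (Fin n) ℝ, X.PosDef ∧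
      X = M + T - T * (X + T)⁻¹ * T ∧
      Filter.Tendsto J Filter.atTop (nhds X) ∧
      ∀ Y : Matrix (Fin n) (Fin n) ℝ, Y.PosDef →
        Y = M + T - T * (Y + T)⁻¹ * T → Y = X := by
  have hrec' : ∀ t, J (t + 1) = riccatiMap M T (J t) := hrec
  have hM0 : 0 ≤ M := hM.posSemidef.nonneg
  have hmono := monotone_riccati_iterate hM0 hT hJ0 hrec'
  have hbdd := riccati_iterate_le hM0 hT hJ0 hrec'
  obtain ⟨X, hX⟩ := exists_tendsto_of_monotone_of_le hmono hbdd
  have hMX : M ≤ X := hJ0 ▸ hmono.ge_of_tendsto hX 0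
  have hXpd : X.PosDef := by simpa using hM.add_posSemidef (le_iff.mp hMX)
  have hXfix := riccatiMap_eq_self_of_tendsto hrec' hX (hXpd.add hT).det_pos.ne'.isUnit
  refine ⟨fun t => hmono t.le_succ, hbdd, X, hXpd, hXfix.symm, hX, fun Y hY hYfix => ?_⟩
  exact eq_of_riccatiMap_eq_self hM hT hY.posSemidef.nonneg hXpd.posSemidef.nonneg hYfix.symm hXfix
end
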